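/- For all x ∈ [0, 1.5], one has |tanh(x)/x − (1 − 0.2·x²)| ≤ 0.15·x², where tanh(x)/x is interpreted as 1 at x = 0. -/

import Mathlib

/-!
Differentiating tanh' = 1 - tanh² turns each partial sum of the alternating series for tanh
into a one-sided bound, starting from tanh x ≤ x:
x - x³/3 ≤ tanh x ≤ x - x³/3 + 2x⁵/15 for x ≥ 0. This gives tanh x / x between 1 - 0.35x² and
1 - 0.05x² for x² ≤ 2; on the rest of [0, 1.5] the upper bound follows from tanh x < 1.
-/

open Set

theorem le_of_hasDerivAt_le {f g f' g' : ℝ → ℝ} {a x : ℝ}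
    (hf : ∀ y, HasDerivAt f (f' y) y) (hg : ∀ y, HasDerivAt g (g' y) y)
    (ha : f a ≤ g a) (hderiv : ∀ y, a < y → f' y ≤ g' y) (hx : a ≤ x) : f x ≤ g x := by
  have hmono : MonotoneOn (fun y => g y - f y) (Ici a) := by
    refine monotoneOn_of_hasDerivWithinAt_nonneg (f' := fun y => g' y - f' y) (convex_Ici a)
      (fun y _ => ((hg y).sub (hf y)).continuousAt.continuousWithinAt)
      (fun y _ => ((hg y).sub (hf y)).hasDerivWithinAt) fun y hy => ?_
    rw [interior_Ici] at hy
    exact sub_nonneg.2 (hderiv y hy)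
  linarith [hmono self_mem_Ici hx hx]

namespace Real

theorem hasDerivAt_tanh (x : ℝ) : HasDerivAt tanh (1 - tanh x ^ 2) x := by
  have hcosh := (cosh_pos x).ne'
  have hquot := (hasDerivAt_sinh x).div (hasDerivAt_cosh x) hcosh
  rw [show sinh / cosh = tanh from funext fun y => (tanh_eq_sinh_div_cosh y).symm] at hquot
  refine hquot.congr_deriv ?_
  rw [tanh_eq_sinh_div_cosh]
  field_simp

theorem tanh_nonneg {x : ℝ} (hx : 0 ≤ x) : 0 ≤ tanh x := by
  rw [tanh_eq_sinh_div_cosh]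
  exact div_nonneg (sinh_nonneg_iff.2 hx) (cosh_pos x).le

theorem tanh_le_self {x : ℝ} (hx : 0 ≤ x) : tanh x ≤ x :=
  le_of_hasDerivAt_le hasDerivAt_tanh (fun y => hasDerivAt_id y) (by simp)
    (fun y _ => sub_le_self 1 (sq_nonneg _)) hx

theorem sub_pow_three_div_three_le_tanh {x : ℝ} (hx : 0 ≤ x) : x - x ^ 3 / 3 ≤ tanh x := by
  refine le_of_hasDerivAt_le (fun y => ((hasDerivAt_id y).sub ((hasDerivAt_pow 3 y).div_const 3)))
    hasDerivAt_tanh (by simp) (fun y hy => ?_) hx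
  have htanh_le := tanh_le_self hy.le
  have htanh_nonneg := tanh_nonneg hy.le
  simp only [Nat.cast_ofNat]
  nlinarith

theorem tanh_le_taylor_five {x : ℝ} (hx : 0 ≤ x) :
    tanh x ≤ x - x ^ 3 / 3 + 2 * x ^ 5 / 15 := by
  refine le_of_hasDerivAt_le hasDerivAt_tanh
    (fun y => ((hasDerivAt_id y).sub ((hasDerivAt_pow 3 y).div_const 3)).add
      (((hasDerivAt_pow 5 y).const_mul 2).div_const 15)) (by simp) (fun y hy => ?_) hx
  simp only [Nat.cast_ofNat]
  have hlow := sub_pow_three_div_three_le_tanh hy.le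
  -- `tanh² ≥ (y - y³/3)² ≥ y² - 2y⁴/3` while `y - y³/3 ≥ 0`; beyond that `y² - 2y⁴/3 < 0`.
  rcases le_total (y ^ 2) 3 with hy3 | hy3
  · have hcubic : 0 ≤ y - y ^ 3 / 3 := by nlinarith
    nlinarith [mul_le_mul hlow hlow hcubic (hcubic.trans hlow), pow_nonneg hy.le 6]
  · nlinarith [sq_nonneg (tanh y)]

end Real

open Real

theorem tanh_le_of_le_three_halves {x : ℝ} (hx0 : 0 ≤ x) (hx1 : x ≤ 1.5) :
    tanh x ≤ x - 0.05 * x ^ 3 := by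
  rcases le_total (x ^ 2) 2 with hx2 | hx2
  · nlinarith [tanh_le_taylor_five hx0, pow_nonneg hx0 3]
  · nlinarith [tanh_lt_one x]

theorem tanh_div_self_approx (x : ℝ) (hx : x ∈ Set.Icc (0:ℝ) 1.5) :
    |(if x = 0 then 1 else Real.tanh x / x) - (1 - 0.2 * x ^ 2)| ≤ 0.15 * x ^ 2 := by
  obtain ⟨hx0, hx1⟩ := hx
  rcases hx0.eq_or_lt with rfl | hpos
  · simp
  have hlow := sub_pow_three_div_three_le_tanh hx0
  have hupp := tanh_le_of_le_three_halves hx0 hx1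
  have hcube := pow_pos hpos 3
  have hdiff : tanh x / x - (1 - 0.2 * x ^ 2) = (tanh x - (x - 0.2 * x ^ 3)) / x := by
    field_simp
  rw [if_neg hpos.ne', hdiff, abs_div, abs_of_pos hpos, div_le_iff₀ hpos, abs_le]
  constructor <;> nlinarith
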